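/- If the negativity of the OQ is strictly positive, N[q^OQ(ρ)] > 0, then there exist indices i, f with [ρ, A_i] ≠ 0, and there exist indices i, f with [A_i, B_f] ≠ 0. -/

import Mathlib

/-!
Summing `q` over `f` uses `∑ f, B f = 1` and summing then over `i` uses `Tr ρ = 1`, so `q` is a
real quasiprobability: `∑ q = 1`. Hence `∑ |q| > 1` forces some `q i f < 0`. On the other hand,
if `ρ` commutes with every `A i`, or every `A i` commutes with every `B f`, then
`∑ i, Tr (A i ρ A i B f) = Tr (ρ B f)`, the correction term of `q` vanishes and
`q i f = Tr ((A i ρ A i) B f) ≥ 0` is the trace of a product of positive semidefinite matrices.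
-/

open Matrix ComplexOrder

namespace Matrix

variable {n : Type*} [Fintype n] [DecidableEq n]

open scoped MatrixOrder in
theorem PosSemidef.trace_mul_nonneg {X Y : Matrix n n ℂ} (hX : X.PosSemidef)
    (hY : Y.PosSemidef) : 0 ≤ (X * Y).trace := by
  set S := CFC.sqrt X
  have hS : S.IsHermitian := (CFC.sqrt_nonneg X).posSemidef.isHermitian
  have hSS : S * S = X := CFC.sqrt_mul_sqrt_self X hX.nonneg
  have hconj : (S * Y * Sᴴ).trace = (X * Y).trace := by
    rw [hS.eq, trace_mul_comm, ← mul_assoc, hSS]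
  exact hconj ▸ (hY.mul_mul_conjTranspose_same S).trace_nonneg

theorem sum_trace_mul_eq_trace {κ : Type*} [Fintype κ] {B : κ → Matrix n n ℂ}
    (hB : ∑ f, B f = 1) (M : Matrix n n ℂ) : ∑ f, (M * B f).trace = M.trace := by
  rw [← trace_sum, ← Finset.mul_sum, hB, mul_one]

end Matrix

section ObservableQuasiprobability

variable {n ι κ : Type*} [Fintype n] [Fintype ι]

/-- The paper's weight `1 / d` appears as `1 / |ι|`: in the paper the number of outcomes of `A` is
the dimension `d`, and `1 / |ι|` is what makes `∑ oq = 1` for any number of outcomes. -/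
noncomputable def oq (ρ : Matrix n n ℂ) (A : ι → Matrix n n ℂ) (B : κ → Matrix n n ℂ)
    (i : ι) (f : κ) : ℂ :=
  (A i * ρ * A i * B f).trace +
    (1 / (Fintype.card ι : ℂ)) * ((ρ * B f).trace - ∑ i', (A i' * ρ * A i' * B f).trace)

theorem sum_oq_eq_one [DecidableEq n] [Fintype κ] [Nonempty ι] {ρ : Matrix n n ℂ}
    (hρ : ρ.trace = 1) (A : ι → Matrix n n ℂ) {B : κ → Matrix n n ℂ} (hB : ∑ f, B f = 1) :
    ∑ i, ∑ f, oq ρ A B i f = 1 := by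
  have hcard : (Fintype.card ι : ℂ) ≠ 0 := Nat.cast_ne_zero.mpr Fintype.card_ne_zero
  have hcorr : ∑ f, ∑ i', (A i' * ρ * A i' * B f).trace = ∑ i', (A i' * ρ * A i').trace := by
    rw [Finset.sum_comm]
    exact Finset.sum_congr rfl fun i' _ => sum_trace_mul_eq_trace hB _
  simp only [oq, Finset.sum_add_distrib, ← Finset.mul_sum, Finset.sum_sub_distrib,
    sum_trace_mul_eq_trace hB, hcorr, hρ, Finset.sum_const, Finset.card_univ, nsmul_eq_mul]
  field_simp
  ring

theorem oq_eq_of_sum_trace_eq {ρ : Matrix n n ℂ} {A : ι → Matrix n n ℂ} {B : κ → Matrix n n ℂ}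
    {f : κ} (h : ∑ i', (A i' * ρ * A i' * B f).trace = (ρ * B f).trace) (i : ι) :
    oq ρ A B i f = (A i * ρ * A i * B f).trace := by
  rw [oq, h, sub_self, mul_zero, add_zero]

theorem oq_nonneg_of_sum_trace_eq [DecidableEq n] {ρ : Matrix n n ℂ} (hρ : ρ.PosSemidef)
    {A : ι → Matrix n n ℂ} (hA : ∀ i, (A i).IsHermitian) {B : κ → Matrix n n ℂ} {f : κ}
    (hB : (B f).PosSemidef) (h : ∑ i', (A i' * ρ * A i' * B f).trace = (ρ * B f).trace) (i : ι) :
    0 ≤ oq ρ A B i f := by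
  have hconj : (A i * ρ * A i).PosSemidef := by
    simpa only [(hA i).eq] using hρ.mul_mul_conjTranspose_same (A i)
  exact oq_eq_of_sum_trace_eq h i ▸ hconj.trace_mul_nonneg hB

theorem sum_trace_eq_of_commute_state [DecidableEq n] {ρ : Matrix n n ℂ} {A : ι → Matrix n n ℂ}
    (hproj : ∀ i, A i * A i = A i) (hsum : ∑ i, A i = 1) (hcomm : ∀ i, ρ * A i = A i * ρ)
    (M : Matrix n n ℂ) : ∑ i, (A i * ρ * A i * M).trace = (ρ * M).trace := by
  have hpinch : ∀ i, A i * ρ * A i = ρ * A i := fun i => by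
    rw [← hcomm i, mul_assoc, hproj i]
  simp only [hpinch, ← trace_sum, ← Finset.sum_mul, ← Finset.mul_sum, hsum, mul_one]

theorem sum_trace_eq_of_commute_effect [DecidableEq n] {ρ M : Matrix n n ℂ}
    {A : ι → Matrix n n ℂ}
    (hproj : ∀ i, A i * A i = A i) (hsum : ∑ i, A i = 1) (hcomm : ∀ i, A i * M = M * A i) :
    ∑ i, (A i * ρ * A i * M).trace = (ρ * M).trace := by
  have hcycle : ∀ i, (A i * ρ * A i * M).trace = (A i * (ρ * M)).trace := fun i => calc
    (A i * ρ * A i * M).trace = (A i * (ρ * M * A i)).trace := by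
      rw [mul_assoc (A i * ρ), hcomm i]; simp only [mul_assoc]
    _ = (ρ * M * A i * A i).trace := trace_mul_comm _ _
    _ = (A i * (ρ * M)).trace := by rw [mul_assoc _ (A i), hproj i, trace_mul_comm]
  simp only [hcycle, ← trace_sum, ← Finset.sum_mul, hsum, one_mul]

end ObservableQuasiprobability

theorem Finset.exists_neg_of_sum_lt_sum_abs {α : Type*} {s : Finset α} {g : α → ℝ}
    (h : ∑ a ∈ s, g a < ∑ a ∈ s, |g a|) : ∃ a ∈ s, g a < 0 := by
  by_contra! hnonneg
  exact h.ne (Finset.sum_congr rfl fun a ha => (abs_of_nonneg (hnonneg a ha)).symm)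

/-- Strictly positive negativity of the OQ witnesses
noncommutativity: some `A_i` fails to commute with `ρ`, and some pair
`A_i, B_f` fails to commute. -/
theorem oq_negativity_witnesses_noncommutativity (d : ℕ) (hd : 0 < d)
    (ρ : Matrix (Fin d) (Fin d) ℂ) (hρ : ρ.PosSemidef) (hρtr : ρ.trace = 1)
    (A : Fin d → Matrix (Fin d) (Fin d) ℂ)
    (hAherm : ∀ i, (A i).IsHermitian) (hAproj : ∀ i, A i * A i = A i)
    (hAsum : ∑ i, A i = 1)
    (B : Fin d → Matrix (Fin d) (Fin d) ℂ)
    (hBpos : ∀ f, (B f).PosSemidef) (hBsum : ∑ f, B f = 1)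
    (q : Fin d → Fin d → ℝ)
    (hq : ∀ i f, (q i f : ℂ) = (A i * ρ * A i * B f).trace +
      (1 / (d : ℂ)) * ((ρ * B f).trace - ∑ i', (A i' * ρ * A i' * B f).trace))
    (hneg : 0 < (∑ i, ∑ f, |q i f|) - 1) :
    (∃ i, ρ * A i ≠ A i * ρ) ∧ (∃ i f, A i * B f ≠ B f * A i) := by
  have : NeZero d := ⟨hd.ne'⟩
  have hq' : ∀ i f, (q i f : ℂ) = oq ρ A B i f := by simpa only [oq, Fintype.card_fin] using hq
  have hsum : ∑ i, ∑ f, q i f = 1 := by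
    have hsumℂ : ((∑ i, ∑ f, q i f : ℝ) : ℂ) = 1 := by
      push_cast
      simp only [hq']
      exact sum_oq_eq_one hρtr A hBsum
    exact_mod_cast hsumℂ
  obtain ⟨⟨i, f⟩, -, hqneg⟩ := Finset.exists_neg_of_sum_lt_sum_abs (s := Finset.univ)
    (g := fun p : Fin d × Fin d => q p.1 p.2) (by simp only [Fintype.sum_prod_type]; linarith)
  have hq_nonneg (h : ∑ i', (A i' * ρ * A i' * B f).trace = (ρ * B f).trace) : 0 ≤ q i f := by
    exact_mod_cast hq' i f ▸ oq_nonneg_of_sum_trace_eq hρ hAherm (hBpos f) h i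
  refine ⟨?_, ?_⟩
  · by_contra! hcomm
    exact hqneg.not_ge (hq_nonneg (sum_trace_eq_of_commute_state hAproj hAsum hcomm _))
  · by_contra! hcomm
    exact hqneg.not_ge (hq_nonneg (sum_trace_eq_of_commute_effect hAproj hAsum (hcomm · f)))
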